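/- Under the uniform random d-subset model, the probability that an output symbol has reduced degree exactly 2 at step u and reduced degree exactly 1 at step u-1 equals (u-1) * C(k-u, d-2) / C(k, d) when 2 ≤ d ≤ k-u+2, and equals 0 otherwise. -/

import Mathlib

/-! A favourable outcome is a pair (S, x) of a neighbour set S and a removed symbol x ∈ A with
|S ∩ A| = 2 and x ∈ S, so every S with |S ∩ A| = 2 contributes exactly two outcomes. Splitting
S = (S ∩ A) ∪ (S \ A) counts these S as C(u, 2) · C(k - u, d - 2), and 2 · C(u, 2) = u (u - 1)
cancels the factor u of the denominator. There are no such S when d < 2 or d - 2 > k - u. -/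

open Finset

namespace Finset

variable {α : Type*} [DecidableEq α]

theorem union_inter_eq_left_of_subset_of_disjoint {A B C : Finset α} (hBA : B ⊆ A)
    (hCA : Disjoint C A) : (B ∪ C) ∩ A = B := by
  rw [union_inter_distrib_right, inter_eq_left.mpr hBA, disjoint_iff_inter_eq_empty.mp hCA,
    union_empty]

theorem card_filter_powersetCard_card_inter_eq {s A : Finset α} (hA : A ⊆ s) {d j : ℕ}
    (hj : j ≤ d) :
    #{S ∈ s.powersetCard d | #(S ∩ A) = j} = (#A).choose j * (#s - #A).choose (d - j) := by
  rw [← card_sdiff_of_subset hA, ← card_powersetCard, ← card_powersetCard, ← card_product]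
  refine card_bij' (fun S _ => (S ∩ A, S \ A)) (fun p _ => p.1 ∪ p.2) ?_ ?_ ?_ ?_
  · intro S hS
    simp only [mem_filter, mem_powersetCard] at hS
    obtain ⟨⟨hSs, hSd⟩, hSA⟩ := hS
    have := card_inter_add_card_sdiff S A
    simp only [mem_product, mem_powersetCard]
    exact ⟨⟨inter_subset_right, hSA⟩, sdiff_subset_sdiff hSs subset_rfl, by omega⟩
  · rintro ⟨B, C⟩ hBC
    simp only [mem_product, mem_powersetCard] at hBC
    obtain ⟨⟨hBA, hB⟩, hCs, hC⟩ := hBC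
    have hCA : Disjoint C A := (subset_sdiff.mp hCs).2
    simp only [mem_filter, mem_powersetCard]
    refine ⟨⟨union_subset (hBA.trans hA) (hCs.trans sdiff_subset), ?_⟩, ?_⟩
    · rw [card_union_of_disjoint (disjoint_of_subset_left hBA hCA.symm), hB, hC]
      omega
    · rw [union_inter_eq_left_of_subset_of_disjoint hBA hCA, hB]
  · intro S _
    exact (union_comm _ _).trans (sdiff_union_inter S A)
  · rintro ⟨B, C⟩ hBC
    simp only [mem_product, mem_powersetCard] at hBC
    obtain ⟨⟨hBA, -⟩, hCs, -⟩ := hBC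
    have hCA : Disjoint C A := (subset_sdiff.mp hCs).2
    simp only [Prod.mk.injEq]
    constructor
    · exact union_inter_eq_left_of_subset_of_disjoint hBA hCA
    · rw [union_sdiff_distrib, sdiff_eq_empty_iff_subset.mpr hBA, empty_union,
        sdiff_eq_self_of_disjoint hCA]

theorem filter_powersetCard_card_inter_eq_eq_empty_of_lt (s A : Finset α) {d j : ℕ}
    (h : d < j) : {S ∈ s.powersetCard d | #(S ∩ A) = j} = ∅ := by
  refine filter_eq_empty_iff.mpr fun S hS hSA => ?_
  have := card_le_card (inter_subset_left (s₁ := S) (s₂ := A))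
  rw [(mem_powersetCard.mp hS).2] at this
  omega

theorem card_filter_product_card_inter_eq_and_mem (𝒜 : Finset (Finset α)) (A : Finset α)
    (j : ℕ) :
    #{p ∈ 𝒜 ×ˢ A | #(p.1 ∩ A) = j ∧ p.2 ∈ p.1} = j * #{S ∈ 𝒜 | #(S ∩ A) = j} := by
  have hfiber (S : Finset α) :
      #{x ∈ A | #(S ∩ A) = j ∧ x ∈ S} = if #(S ∩ A) = j then j else 0 := by
    split_ifs with hS
    · simp only [hS, true_and, filter_mem_eq_inter, inter_comm A S]
    · simp [hS]
  rw [card_filter, sum_product, sum_congr rfl fun S _ => (card_filter _ _).symm.trans (hfiber S),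
    sum_ite, sum_const_zero, add_zero, sum_const, smul_eq_mul, mul_comm]

end Finset

theorem stmt2_general (k u d : ℕ)
    (A : Finset (Fin k)) (hA : A.card = u) :
    ((((Finset.powersetCard d (Finset.univ : Finset (Fin k))) ×ˢ A).filter
        (fun p => (p.1 ∩ A).card = 2 ∧ p.2 ∈ p.1)).card : ℚ) /
        ((k.choose d : ℚ) * u) =
      if 2 ≤ d ∧ d ≤ k - u + 2 then
        (((u - 1) * (k - u).choose (d - 2) : ℕ) : ℚ) / (k.choose d)
      else 0 := by
  subst hA
  rw [card_filter_product_card_inter_eq_and_mem]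
  split_ifs with hd
  · rw [card_filter_powersetCard_card_inter_eq (subset_univ A) hd.1, card_univ,
      Fintype.card_fin]
    rcases Nat.eq_zero_or_pos #A with hA | hA
    · simp [hA]
    · push_cast [Nat.cast_choose_two, Nat.cast_sub hA]
      field_simp
  · have hzero : #{S ∈ univ.powersetCard d | #(S ∩ A) = 2} = 0 := by
      rcases lt_or_ge d 2 with hd2 | hd2
      · rw [filter_powersetCard_card_inter_eq_eq_empty_of_lt _ _ hd2, card_empty]
      · rw [card_filter_powersetCard_card_inter_eq (subset_univ A) hd2,
          card_univ, Fintype.card_fin, Nat.choose_eq_zero_of_lt (n := k - #A) (by omega),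
          mul_zero]
    simp [hzero]

/-- Joint probability that an output symbol has reduced degree 2 at step `u`
and reduced degree 1 at step `u-1` (the removed active symbol chosen uniformly
among the `u` active symbols is one of its two active neighbors). -/
theorem stmt2 (k u d : ℕ) (hk : 1 ≤ k) (hu1 : 1 ≤ u) (huk : u ≤ k)
    (A : Finset (Fin k)) (hA : A.card = u) :
    ((((Finset.powersetCard d (Finset.univ : Finset (Fin k))) ×ˢ A).filter
        (fun p => (p.1 ∩ A).card = 2 ∧ p.2 ∈ p.1)).card : ℚ) /
        ((k.choose d : ℚ) * u) =
      if 2 ≤ d ∧ d ≤ k - u + 2 then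
        (((u - 1) * (k - u).choose (d - 2) : ℕ) : ℚ) / (k.choose d)
      else 0 :=
  stmt2_general k u d A hA
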